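/- Let L be a selfadjoint operator in L²(X, m), bounded below, with E0 the infimum of the spectrum of L, and assume that the semigroup (e^{-tL})_{t≥0} is positivity improving. Then for every positive f ∈ L²(X, m) one has E0 = inf supp(ρ_f), and in particular 1_{[E0, E0+δ)}(L) f ≠ 0 for every δ > 0. -/

import Mathlib

open MeasureTheory Filter Topology
open scoped InnerProductSpace ENNReal

noncomputable section

/-- The infimum of the topological support of a Borel measure on `ℝ`, following the paper's
definition: `supp μ = {E : ∀ δ > 0, μ(E - δ, E + δ) > 0}`. -/
def suppInf (μ : Measure ℝ) : ℝ :=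
  sInf {E : ℝ | ∀ δ > 0, 0 < μ (Set.Ioo (E - δ) (E + δ))}

/-- `T` is the heat semigroup `(e^{-tL})_{t ≥ 0}` of a selfadjoint operator `L` in `H` that is
bounded below, where `ρ f` is the spectral measure of `f` with respect to `L` (the finite Borel
measure supported in `[E0, ∞)` with `⟪f, e^{-tL} f⟫ = ∫ e^{-ts} dρ_f(s)` for all `t ≥ 0`),
and `E0` is the infimum of the spectrum of `L` (equivalently, `‖e^{-tL}‖ = e^{-t·E0}`). -/
structure IsHeatSemigroupOf {H : Type*} [NormedAddCommGroup H] [InnerProductSpace ℝ H]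
    [CompleteSpace H] (T : ℝ → H →L[ℝ] H) (ρ : H → Measure ℝ) (E0 : ℝ) : Prop where
  symm : ∀ t : ℝ, 0 ≤ t → ∀ f g : H, ⟪T t f, g⟫_ℝ = ⟪f, T t g⟫_ℝ
  map_zero : T 0 = 1
  semigroup : ∀ s t : ℝ, 0 ≤ s → 0 ≤ t → T (s + t) = T s ∘L T t
  finite : ∀ f : H, ρ f Set.univ ≠ ⊤
  support_bddBelow : ∀ f : H, ρ f (Set.Iio E0) = 0
  inner_eq : ∀ (f : H) (t : ℝ), 0 ≤ t → ⟪f, T t f⟫_ℝ = ∫ s, Real.exp (-(t * s)) ∂(ρ f)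
  norm_eq : ∀ t : ℝ, 0 ≤ t → ‖T t‖ = Real.exp (-(t * E0))

/-!
If `ρ_f` vanished on `[E0, E0 + δ)`, then `⟪f, e^{-tL} f⟫` would decay like `e^{-t(E0 + δ)}`.
Positivity of the semigroup transfers this decay from the strictly positive vector
`u = e^{-L} f` to every `0 ≤ w ≤ n • u`. A bound `C e^{-tc}` on the Laplace transform of a
spectral measure forces it to live on `[c, ∞)`, so the decay then holds with the sharp constant
`‖w‖²`, which survives the limit `w ⊓ n • u → w`. Splitting `z = z⁺ - z⁻` yields
`‖e^{-tL}‖ ≤ 2 e^{-t(E0 + δ)}`, which is incompatible with `‖e^{-tL}‖ = e^{-t E0}`.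
-/

open Set

section LaplaceTransform

variable {μ : Measure ℝ} {c t : ℝ}

lemma ae_le_of_measure_Iio_eq_zero (hc : μ (Iio c) = 0) : ∀ᵐ s ∂μ, c ≤ s :=
  ae_iff.mpr (measure_mono_null (fun _ hs => lt_of_not_ge hs) hc)

lemma integrable_exp_neg_mul_of_measure_Iio_eq_zero [IsFiniteMeasure μ] (hc : μ (Iio c) = 0)
    (ht : 0 ≤ t) :
    Integrable (fun s => Real.exp (-(t * s))) μ := by
  refine (integrable_const (Real.exp (-(t * c)))).mono' (by fun_prop) ?_
  filter_upwards [ae_le_of_measure_Iio_eq_zero hc] with s hs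
  rw [Real.norm_of_nonneg (Real.exp_pos _).le]
  exact Real.exp_le_exp.mpr (by nlinarith)

lemma integral_exp_neg_mul_le_of_measure_Iio_eq_zero [IsFiniteMeasure μ] (hc : μ (Iio c) = 0)
    (ht : 0 ≤ t) :
    ∫ s, Real.exp (-(t * s)) ∂μ ≤ Real.exp (-(t * c)) * μ.real univ := by
  calc ∫ s, Real.exp (-(t * s)) ∂μ ≤ ∫ _, Real.exp (-(t * c)) ∂μ := by
        refine integral_mono_ae (integrable_exp_neg_mul_of_measure_Iio_eq_zero hc ht)
          (integrable_const _) ?_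
        filter_upwards [ae_le_of_measure_Iio_eq_zero hc] with s hs
        exact Real.exp_le_exp.mpr (by nlinarith)
    _ = Real.exp (-(t * c)) * μ.real univ := by rw [integral_const, smul_eq_mul, mul_comm]

lemma measure_Iic_eq_zero_of_integral_exp_neg_mul_le [IsFiniteMeasure μ] {s₀ C : ℝ} (hs₀ : s₀ < c)
    (hint : ∀ t, 0 ≤ t → Integrable (fun s => Real.exp (-(t * s))) μ)
    (hC : ∀ t, 0 ≤ t → ∫ s, Real.exp (-(t * s)) ∂μ ≤ C * Real.exp (-(t * c))) :
    μ (Iic s₀) = 0 := by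
  have hbound : ∀ t, 0 ≤ t → μ.real (Iic s₀) ≤ C * Real.exp (-(t * (c - s₀))) := by
    intro t ht
    have hlow : Real.exp (-(t * s₀)) * μ.real (Iic s₀) ≤ ∫ s, Real.exp (-(t * s)) ∂μ :=
      calc _ ≤ ∫ s in Iic s₀, Real.exp (-(t * s)) ∂μ :=
            setIntegral_ge_of_const_le_real measurableSet_Iic (measure_ne_top _ _)
              (fun s hs => Real.exp_le_exp.mpr (by nlinarith [mem_Iic.mp hs]))
              (hint t ht).integrableOn
        _ ≤ _ := setIntegral_le_integral (hint t ht) (.of_forall fun _ => (Real.exp_pos _).le)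
    have hsplit : C * Real.exp (-(t * c))
        = Real.exp (-(t * s₀)) * (C * Real.exp (-(t * (c - s₀)))) := by
      rw [mul_left_comm, ← Real.exp_add]; ring_nf
    exact le_of_mul_le_mul_left (hsplit ▸ hlow.trans (hC t ht)) (Real.exp_pos _)
  have hdecay : Tendsto (fun t => C * Real.exp (-(t * (c - s₀)))) atTop (𝓝 0) := by
    have h := (Real.tendsto_exp_atBot.comp
      (tendsto_neg_atTop_atBot.comp (tendsto_id.atTop_mul_const (sub_pos.mpr hs₀)))).const_mul C
    simpa using h
  have hle : μ.real (Iic s₀) ≤ 0 :=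
    ge_of_tendsto hdecay ((eventually_ge_atTop 0).mono hbound)
  exact (measureReal_eq_zero_iff).mp (le_antisymm hle measureReal_nonneg)

lemma measure_Iio_eq_zero_of_integral_exp_neg_mul_le [IsFiniteMeasure μ] {C : ℝ}
    (hint : ∀ t, 0 ≤ t → Integrable (fun s => Real.exp (-(t * s))) μ)
    (hC : ∀ t, 0 ≤ t → ∫ s, Real.exp (-(t * s)) ∂μ ≤ C * Real.exp (-(t * c))) :
    μ (Iio c) = 0 := by
  have hlt : ∀ n : ℕ, c - 1 / (n + 1) < c := fun n => sub_lt_self c (by positivity)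
  have hlim : Tendsto (fun n : ℕ => c - 1 / (n + 1)) atTop (𝓝 c) := by
    simpa using tendsto_const_nhds.sub (tendsto_one_div_add_atTop_nhds_zero_nat (𝕜 := ℝ))
  rw [← iUnion_Iic_eq_Iio_of_lt_of_tendsto hlt hlim]
  exact measure_iUnion_null fun n => measure_Iic_eq_zero_of_integral_exp_neg_mul_le (hlt n) hint hC

end LaplaceTransform

lemma suppInf_eq_of_measure_Iio_eq_zero {μ : Measure ℝ} {a : ℝ} (h0 : μ (Iio a) = 0)
    (hpos : ∀ δ : ℝ, 0 < δ → μ (Ico a (a + δ)) ≠ 0) : suppInf μ = a := by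
  refine IsLeast.csInf_eq ⟨fun δ hδ => ?_, fun E hE => ?_⟩
  · exact (pos_iff_ne_zero.mpr (hpos δ hδ)).trans_le
      (measure_mono (Ico_subset_Ioo_left (sub_lt_self a hδ)))
  · by_contra! hlt
    have hnull : μ (Ioo (E - (a - E)) (E + (a - E))) = 0 :=
      measure_mono_null (fun s hs => by simpa using hs.2) h0
    exact (hE (a - E) (sub_pos.mpr hlt)).ne' hnull

lemma ContinuousLinearMap.opNorm_le_two_mul_of_forall_nonneg {E F : Type*}
    [NormedAddCommGroup E] [Lattice E] [HasSolidNorm E] [IsOrderedAddMonoid E] [NormedSpace ℝ E]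
    [SeminormedAddCommGroup F] [NormedSpace ℝ F] (A : E →L[ℝ] F) {K : ℝ} (hK : 0 ≤ K)
    (h : ∀ w, 0 ≤ w → ‖A w‖ ≤ K * ‖w‖) : ‖A‖ ≤ 2 * K := by
  refine A.opNorm_le_bound (by positivity) fun z => ?_
  have hpos : ‖z⁺‖ ≤ ‖z‖ := by
    refine (norm_le_norm_of_abs_le_abs ?_).trans_eq (norm_abs_eq_norm z)
    rw [abs_of_nonneg (posPart_nonneg z), abs_abs, ← posPart_add_negPart]
    exact le_add_of_nonneg_right (negPart_nonneg z)
  have hneg : ‖z⁻‖ ≤ ‖z‖ := by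
    refine (norm_le_norm_of_abs_le_abs ?_).trans_eq (norm_abs_eq_norm z)
    rw [abs_of_nonneg (negPart_nonneg z), abs_abs, ← posPart_add_negPart]
    exact le_add_of_nonneg_left (posPart_nonneg z)
  calc ‖A z‖ = ‖A z⁺ - A z⁻‖ := by rw [← map_sub, posPart_sub_negPart]
    _ ≤ ‖A z⁺‖ + ‖A z⁻‖ := norm_sub_le _ _
    _ ≤ K * ‖z⁺‖ + K * ‖z⁻‖ := add_le_add (h _ (posPart_nonneg z)) (h _ (negPart_nonneg z))
    _ ≤ 2 * K * ‖z‖ := by nlinarith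

lemma le_of_forall_exp_neg_mul_le {a b K : ℝ}
    (h : ∀ s, 0 ≤ s → Real.exp (-(s * a)) ≤ K * Real.exp (-(s * b))) : b ≤ a := by
  by_contra! hab
  have hgrow : Tendsto (fun s => Real.exp (s * (b - a))) atTop atTop :=
    Real.tendsto_exp_atTop.comp (tendsto_id.atTop_mul_const (sub_pos.mpr hab))
  obtain ⟨s, hK, hs⟩ := ((hgrow.eventually_gt_atTop K).and (eventually_ge_atTop 0)).exists
  have hsplit : Real.exp (-(s * a)) = Real.exp (s * (b - a)) * Real.exp (-(s * b)) := by
    rw [← Real.exp_add]; ring_nf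
  have := h s hs
  rw [hsplit] at this
  exact hK.not_ge (le_of_mul_le_mul_right this (Real.exp_pos _))

namespace MeasureTheory.Lp

variable {X : Type*} [MeasurableSpace X] {m : Measure X}

lemma inner_nonneg_of_nonneg {a b : Lp ℝ 2 m} (ha : 0 ≤ a) (hb : 0 ≤ b) : 0 ≤ ⟪a, b⟫_ℝ := by
  rw [L2.inner_def]
  refine integral_nonneg_of_ae ?_
  filter_upwards [(coeFn_nonneg a).mpr ha, (coeFn_nonneg b).mpr hb] with x hax hbx
  exact mul_nonneg hbx hax

lemma norm_sq_eq_integral_sq (v : Lp ℝ 2 m) : ‖v‖ ^ 2 = ∫ x, v x ^ 2 ∂m := by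
  rw [← real_inner_self_eq_norm_sq, L2.inner_def]
  simp [sq]

lemma tendsto_inf_natCast_smul {w u : Lp ℝ 2 m} (hw : 0 ≤ w) (hu : ∀ᵐ x ∂m, 0 < u x) :
    Tendsto (fun n : ℕ => w ⊓ (n : ℝ) • u) atTop (𝓝 w) := by
  set F : ℕ → X → ℝ := fun n x => (w x - min (w x) (n * u x)) ^ 2
  have hF : ∀ n : ℕ, ‖w - w ⊓ (n : ℝ) • u‖ ^ 2 = ∫ x, F n x ∂m := by
    intro n
    rw [norm_sq_eq_integral_sq]
    refine integral_congr_ae ?_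
    filter_upwards [coeFn_sub w (w ⊓ (n : ℝ) • u), coeFn_inf w ((n : ℝ) • u),
      coeFn_smul (n : ℝ) u] with x h1 h2 h3
    simp only [F, h1, Pi.sub_apply, h2, Pi.inf_apply, h3, Pi.smul_apply, smul_eq_mul]
  have hw' : ∀ᵐ x ∂m, 0 ≤ w x := (coeFn_nonneg w).mpr hw
  have hlim : Tendsto (fun n => ∫ x, F n x ∂m) atTop (𝓝 0) := by
    rw [← integral_zero X ℝ]
    refine tendsto_integral_of_dominated_convergence (fun x => w x ^ 2) (fun n => by fun_prop)
      (Lp.memLp w).integrable_sq (fun n => ?_) ?_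
    · filter_upwards [hw', hu] with x hwx hux
      have hmin : 0 ≤ min (w x) (n * u x) := le_min hwx (by positivity)
      rw [Real.norm_of_nonneg (sq_nonneg _)]
      exact pow_le_pow_left₀ (by linarith [min_le_left (w x) (n * u x)]) (by linarith) 2
    · filter_upwards [hu] with x hux
      refine tendsto_const_nhds.congr' ?_
      filter_upwards [tendsto_natCast_atTop_atTop.eventually_ge_atTop (w x / u x)] with n hn
      simp only [F, min_eq_left ((div_le_iff₀ hux).mp hn), sub_self]
      norm_num
  rw [tendsto_iff_norm_sub_tendsto_zero]
  refine (Real.sqrt_zero ▸ hlim.sqrt).congr fun n => ?_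
  rw [← hF, Real.sqrt_sq (norm_nonneg _), norm_sub_rev]

lemma inner_apply_mono {A : Lp ℝ 2 m →L[ℝ] Lp ℝ 2 m} (hA : ∀ g, 0 ≤ g → 0 ≤ A g)
    {a b : Lp ℝ 2 m} (ha : 0 ≤ a) (hab : a ≤ b) : ⟪a, A a⟫_ℝ ≤ ⟪b, A b⟫_ℝ := by
  obtain ⟨d, hd, rfl⟩ : ∃ d, 0 ≤ d ∧ b = a + d := ⟨b - a, sub_nonneg.mpr hab, by abel⟩
  have h1 := inner_nonneg_of_nonneg ha (hA d hd)
  have h2 := inner_nonneg_of_nonneg hd (hA a ha)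
  have h3 := inner_nonneg_of_nonneg hd (hA d hd)
  simp only [map_add, inner_add_left, inner_add_right]
  linarith

end MeasureTheory.Lp

def IsPositivityImproving {X : Type*} [MeasurableSpace X] {m : Measure X}
    (T : ℝ → Lp ℝ 2 m →L[ℝ] Lp ℝ 2 m) : Prop :=
  ∀ t : ℝ, 0 < t → ∀ f : Lp ℝ 2 m, 0 ≤ f → f ≠ 0 → ∀ᵐ x ∂m, 0 < (T t f) x

lemma IsPositivityImproving.apply_nonneg {X : Type*} [MeasurableSpace X] {m : Measure X}
    {T : ℝ → Lp ℝ 2 m →L[ℝ] Lp ℝ 2 m} (hpi : IsPositivityImproving T) (h0 : T 0 = 1)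
    {t : ℝ} (ht : 0 ≤ t) {g : Lp ℝ 2 m} (hg : 0 ≤ g) : 0 ≤ T t g := by
  rcases ht.eq_or_lt with rfl | ht
  · simpa [h0] using hg
  rcases eq_or_ne g 0 with rfl | hg0
  · simp
  exact (Lp.coeFn_nonneg _).mp ((hpi t ht g hg hg0).mono fun _ hx => hx.le)

namespace IsHeatSemigroupOf

section HilbertSpace

variable {H : Type*} [NormedAddCommGroup H] [InnerProductSpace ℝ H] [CompleteSpace H]
  {T : ℝ → H →L[ℝ] H} {ρ : H → Measure ℝ} {E0 : ℝ}

lemma isFiniteMeasure (hT : IsHeatSemigroupOf T ρ E0) (z : H) : IsFiniteMeasure (ρ z) :=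
  ⟨(hT.finite z).lt_top⟩

lemma norm_sq_eq_measureReal_univ (hT : IsHeatSemigroupOf T ρ E0) (z : H) :
    ‖z‖ ^ 2 = (ρ z).real univ := by
  have := hT.isFiniteMeasure z
  have h := hT.inner_eq z 0 le_rfl
  simp only [hT.map_zero, one_apply_eq_self, zero_mul, neg_zero, Real.exp_zero,
    integral_const, smul_eq_mul, mul_one] at h
  rw [← real_inner_self_eq_norm_sq, h]

lemma inner_apply_le_of_measure_Iio_eq_zero (hT : IsHeatSemigroupOf T ρ E0) {z : H} {c t : ℝ}
    (hc : ρ z (Iio c) = 0) (ht : 0 ≤ t) : ⟪z, T t z⟫_ℝ ≤ Real.exp (-(t * c)) * ‖z‖ ^ 2 := by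
  have := hT.isFiniteMeasure z
  rw [hT.inner_eq z t ht, hT.norm_sq_eq_measureReal_univ]
  exact integral_exp_neg_mul_le_of_measure_Iio_eq_zero hc ht

lemma measure_Iio_eq_zero_of_inner_apply_le (hT : IsHeatSemigroupOf T ρ E0) {z : H} {c C : ℝ}
    (hC : ∀ t, 0 ≤ t → ⟪z, T t z⟫_ℝ ≤ C * Real.exp (-(t * c))) : ρ z (Iio c) = 0 := by
  have := hT.isFiniteMeasure z
  exact measure_Iio_eq_zero_of_integral_exp_neg_mul_le
    (fun t ht => integrable_exp_neg_mul_of_measure_Iio_eq_zero (hT.support_bddBelow z) ht)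
    (fun t ht => hT.inner_eq z t ht ▸ hC t ht)

lemma inner_apply_le_exp_mul_norm_sq (hT : IsHeatSemigroupOf T ρ E0) {z : H} {c C t : ℝ}
    (hC : ∀ t, 0 ≤ t → ⟪z, T t z⟫_ℝ ≤ C * Real.exp (-(t * c))) (ht : 0 ≤ t) :
    ⟪z, T t z⟫_ℝ ≤ Real.exp (-(t * c)) * ‖z‖ ^ 2 :=
  hT.inner_apply_le_of_measure_Iio_eq_zero (hT.measure_Iio_eq_zero_of_inner_apply_le hC) ht

lemma inner_apply_two_mul (hT : IsHeatSemigroupOf T ρ E0) {s : ℝ} (hs : 0 ≤ s) (z : H) :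
    ⟪z, T (2 * s) z⟫_ℝ = ‖T s z‖ ^ 2 := by
  rw [two_mul, hT.semigroup s s hs hs, ContinuousLinearMap.comp_apply, ← hT.symm s hs,
    real_inner_self_eq_norm_sq]

lemma inner_apply_apply (hT : IsHeatSemigroupOf T ρ E0) {s t : ℝ} (hs : 0 ≤ s) (ht : 0 ≤ t)
    (z : H) : ⟪T s z, T t (T s z)⟫_ℝ = ⟪z, T (t + 2 * s) z⟫_ℝ := by
  have h : T (t + 2 * s) = T s ∘L (T t ∘L T s) := by
    rw [← hT.semigroup t s ht hs, ← hT.semigroup s (t + s) hs (add_nonneg ht hs)]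
    ring_nf
  rw [hT.symm s hs, h]
  rfl

end HilbertSpace

variable {X : Type*} [MeasurableSpace X] {m : Measure X}
  {T : ℝ → Lp ℝ 2 m →L[ℝ] Lp ℝ 2 m} {ρ : Lp ℝ 2 m → Measure ℝ} {E0 : ℝ}

lemma inner_apply_le_exp_mul_norm_sq_of_nonneg (hT : IsHeatSemigroupOf T ρ E0)
    (hpos : ∀ t, 0 ≤ t → ∀ g, 0 ≤ g → 0 ≤ T t g) {u : Lp ℝ 2 m} (hu : ∀ᵐ x ∂m, 0 < u x)
    {c C : ℝ} (hC : ∀ t, 0 ≤ t → ⟪u, T t u⟫_ℝ ≤ C * Real.exp (-(t * c)))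
    {w : Lp ℝ 2 m} (hw : 0 ≤ w) {t : ℝ} (ht : 0 ≤ t) :
    ⟪w, T t w⟫_ℝ ≤ Real.exp (-(t * c)) * ‖w‖ ^ 2 := by
  have hu0 : 0 ≤ u := (Lp.coeFn_nonneg u).mp (hu.mono fun _ hx => hx.le)
  have hnu : ∀ n : ℕ, 0 ≤ (n : ℝ) • u := fun n => Nat.cast_smul_eq_nsmul ℝ n u ▸ nsmul_nonneg hu0 n
  have happrox : ∀ n : ℕ, ⟪w ⊓ (n : ℝ) • u, T t (w ⊓ (n : ℝ) • u)⟫_ℝ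
      ≤ Real.exp (-(t * c)) * ‖w ⊓ (n : ℝ) • u‖ ^ 2 := by
    intro n
    refine hT.inner_apply_le_exp_mul_norm_sq (C := n ^ 2 * C) (fun s hs => ?_) ht
    calc ⟪w ⊓ (n : ℝ) • u, T s (w ⊓ (n : ℝ) • u)⟫_ℝ
        ≤ ⟪(n : ℝ) • u, T s ((n : ℝ) • u)⟫_ℝ :=
          Lp.inner_apply_mono (hpos s hs) (le_inf hw (hnu n)) inf_le_right
      _ = n ^ 2 * ⟪u, T s u⟫_ℝ := by
          rw [map_smul, real_inner_smul_left, real_inner_smul_right]; ring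
      _ ≤ n ^ 2 * (C * Real.exp (-(s * c))) := by gcongr; exact hC s hs
      _ = n ^ 2 * C * Real.exp (-(s * c)) := by ring
  have hlim := Lp.tendsto_inf_natCast_smul hw hu
  exact le_of_tendsto_of_tendsto' (((continuous_id.inner (T t).continuous).tendsto w).comp hlim)
    ((((continuous_norm.tendsto w).comp hlim).pow 2).const_mul _) happrox

lemma opNorm_le_of_forall_nonneg (hT : IsHeatSemigroupOf T ρ E0) {c : ℝ}
    (h : ∀ w, 0 ≤ w → ∀ t, 0 ≤ t → ⟪w, T t w⟫_ℝ ≤ Real.exp (-(t * c)) * ‖w‖ ^ 2)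
    {s : ℝ} (hs : 0 ≤ s) : ‖T s‖ ≤ 2 * Real.exp (-(s * c)) := by
  refine (T s).opNorm_le_two_mul_of_forall_nonneg (Real.exp_pos _).le fun w hw => ?_
  have hsq : ‖T s w‖ ^ 2 ≤ (Real.exp (-(s * c)) * ‖w‖) ^ 2 := by
    rw [← hT.inner_apply_two_mul hs, mul_pow, ← Real.exp_nat_mul]
    convert h w hw (2 * s) (by positivity) using 3
    push_cast; ring
  exact (pow_le_pow_iff_left₀ (norm_nonneg _) (by positivity) two_ne_zero).mp hsq

theorem measure_Ico_ne_zero (hT : IsHeatSemigroupOf T ρ E0) (hpi : IsPositivityImproving T)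
    {f : Lp ℝ 2 m} (hf : 0 ≤ f) (hf' : f ≠ 0) {δ : ℝ} (hδ : 0 < δ) :
    ρ f (Ico E0 (E0 + δ)) ≠ 0 := by
  intro hIco
  have hIio : ρ f (Iio (E0 + δ)) = 0 := by
    rw [← Iio_union_Ico_eq_Iio (by linarith)]
    exact measure_union_null (hT.support_bddBelow f) hIco
  have hdecay : ∀ t, 0 ≤ t → ⟪T 1 f, T t (T 1 f)⟫_ℝ
      ≤ Real.exp (-(2 * (E0 + δ))) * ‖f‖ ^ 2 * Real.exp (-(t * (E0 + δ))) := by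
    intro t ht
    rw [hT.inner_apply_apply zero_le_one ht]
    refine (hT.inner_apply_le_of_measure_Iio_eq_zero hIio (by positivity)).trans_eq ?_
    rw [mul_right_comm, ← Real.exp_add]; ring_nf
  have hpos : ∀ t, 0 ≤ t → ∀ g : Lp ℝ 2 m, 0 ≤ g → 0 ≤ T t g :=
    fun _ ht _ hg => hpi.apply_nonneg hT.map_zero ht hg
  have hnorm : ∀ s, 0 ≤ s → Real.exp (-(s * E0)) ≤ 2 * Real.exp (-(s * (E0 + δ))) :=
    fun s hs => hT.norm_eq s hs ▸ hT.opNorm_le_of_forall_nonneg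
      (fun w hw t ht => hT.inner_apply_le_exp_mul_norm_sq_of_nonneg hpos
        (hpi 1 one_pos f hf hf') hdecay hw ht) hs
  linarith [le_of_forall_exp_neg_mul_le hnorm]

end IsHeatSemigroupOf

theorem statement6_general {X : Type*} [MeasurableSpace X] (m : Measure X)
    (T : ℝ → Lp ℝ 2 m →L[ℝ] Lp ℝ 2 m) (ρ : Lp ℝ 2 m → Measure ℝ) (E0 : ℝ)
    (hT : IsHeatSemigroupOf T ρ E0)
    (hpi : ∀ t : ℝ, 0 < t → ∀ f : Lp ℝ 2 m, 0 ≤ f → f ≠ 0 → ∀ᵐ x ∂m, 0 < (T t f) x)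
    (f : Lp ℝ 2 m) (hf : 0 ≤ f) (hf' : f ≠ 0) :
    E0 = suppInf (ρ f) ∧ ∀ δ : ℝ, 0 < δ → ρ f (Set.Ico E0 (E0 + δ)) ≠ 0 := by
  have hIco : ∀ δ : ℝ, 0 < δ → ρ f (Set.Ico E0 (E0 + δ)) ≠ 0 :=
    fun δ hδ => hT.measure_Ico_ne_zero hpi hf hf' hδ
  exact ⟨(suppInf_eq_of_measure_Iio_eq_zero (hT.support_bddBelow f) hIco).symm, hIco⟩

/-- Let `L` be a selfadjoint operator in `L²(X, m)` (with `(X, m)` σ-finite),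
bounded below, with `E0` the infimum of the spectrum of `L`, and assume that the semigroup
`(e^{-tL})_{t≥0}` is positivity improving. Then for every positive `f ∈ L²(X, m)` one has
`E0 = inf supp(ρ_f)`, and in particular the spectral projection `1_{[E0, E0+δ)}(L)` does not
annihilate `f` for any `δ > 0`; since `‖1_S(L) f‖² = ρ_f(S)`, the latter says precisely
`ρ_f([E0, E0 + δ)) ≠ 0`. -/
theorem statement6 {X : Type*} [MeasurableSpace X] (m : Measure X) [SigmaFinite m]
    (T : ℝ → Lp ℝ 2 m →L[ℝ] Lp ℝ 2 m) (ρ : Lp ℝ 2 m → Measure ℝ) (E0 : ℝ)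
    (hT : IsHeatSemigroupOf T ρ E0)
    (hpi : ∀ t : ℝ, 0 < t → ∀ f : Lp ℝ 2 m, 0 ≤ f → f ≠ 0 → ∀ᵐ x ∂m, 0 < (T t f) x)
    (f : Lp ℝ 2 m) (hf : 0 ≤ f) (hf' : f ≠ 0) :
    E0 = suppInf (ρ f) ∧ ∀ δ : ℝ, 0 < δ → ρ f (Set.Ico E0 (E0 + δ)) ≠ 0 :=
  statement6_general m T ρ E0 hT hpi f hf hf'
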